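/- arXiv:1410.6089 — 3 statements merged into one kernel-verified Lean document; each statement's English description precedes it below -/
import Mathlib

section
/- (Ky Fan) For a real symmetric n×n matrix A and any n×k matrix X with orthonormal columns x₁,...,x_k, the sum Σ_{i=1}^k x_iᵀ A x_i is at most λ₁(A) + ... + λ_k(A), the sum of the k largest eigenvalues of A, and this bound is attained by taking x_i to be orthonormal eigenvectors for the k largest eigenvalues. -/
open scoped Matrix

lemma kyfan_helper_norm {m p : ℕ} (M : Matrix (Fin m) (Fin p) ℝ) (h : Mᵀ * M = 1)
    (a : Fin p → ℝ) : (M *ᵥ a) ⬝ᵥ (M *ᵥ a) = a ⬝ᵥ a := by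
  rw [Matrix.dotProduct_mulVec]
  have : (M *ᵥ a) ᵥ* M = a := by
    rw [← Matrix.mulVec_transpose, Matrix.mulVec_mulVec, h, Matrix.one_mulVec]
  rw [this]

lemma kyfan_helper_cross {m p : ℕ} (M : Matrix (Fin m) (Fin p) ℝ) (a : Fin p → ℝ)
    (b : Fin m → ℝ) : a ⬝ᵥ (Mᵀ *ᵥ b) = (M *ᵥ a) ⬝ᵥ b := by
  rw [Matrix.dotProduct_mulVec, Matrix.vecMul_transpose]

lemma kyfan_dp_self_nonneg {p : ℕ} (a : Fin p → ℝ) : 0 ≤ a ⬝ᵥ a := by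
  simp only [dotProduct, ← sq]
  exact Finset.sum_nonneg fun i _ => sq_nonneg _

lemma kyfan_sum_castLE (n k : ℕ) (hk : k ≤ n) (h : Fin n → ℝ) :
    ∑ i : Fin k, h (Fin.castLE hk i) = ∑ j : Fin n, if (j : ℕ) < k then h j else 0 := by
  rcases Nat.eq_zero_or_pos k with h0 | h0
  · subst h0; simp
  rw [← Finset.sum_filter]
  refine Finset.sum_nbij' (i := fun j => Fin.castLE hk j)
    (j := fun j => if hj : (j : ℕ) < k then (⟨(j : ℕ), hj⟩ : Fin k) else ⟨0, h0⟩)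
    ?_ ?_ ?_ ?_ ?_
  · intro a _; simp [a.2]
  · intro a _; simp
  · intro a _; simp [a.2]
  · intro a ha
    have := (Finset.mem_filter.mp ha).2
    simp [this]
  · intro a _; rfl

lemma kyfan_aux_ineq (n k : ℕ) (hk : k ≤ n) (f t : Fin n → ℝ) (hmono : Antitone f)
    (ht0 : ∀ j, 0 ≤ t j) (ht1 : ∀ j, t j ≤ 1) (hts : ∑ j, t j = k) :
    ∑ j, f j * t j ≤ ∑ i : Fin k, f (Fin.castLE hk i) := by
  rcases Nat.eq_zero_or_pos k with h0 | h0
  · subst h0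
    have : ∀ j ∈ Finset.univ, t j = 0 := by
      intro j _
      have := (Finset.sum_eq_zero_iff_of_nonneg (fun j _ => ht0 j)).mp (by simpa using hts)
      exact this j (Finset.mem_univ j)
    rw [Finset.sum_congr rfl (fun j hj => by rw [this j hj, mul_zero])]
    simp
  have hk1 : k - 1 < n := by omega
  set μ : ℝ := f ⟨k - 1, hk1⟩ with hμ
  set g : Fin n → ℝ := fun j => if (j : ℕ) < k then 1 else 0 with hg
  have hgs : ∑ j, g j = k := by
    have := kyfan_sum_castLE n k hk (fun _ => (1 : ℝ))
    simp only [hg]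
    rw [← this]
    simp
  have hfg : ∑ i : Fin k, f (Fin.castLE hk i) = ∑ j, f j * g j := by
    rw [kyfan_sum_castLE n k hk f]
    apply Finset.sum_congr rfl
    intro j _
    by_cases hj : (j : ℕ) < k <;> simp [hg, hj]
  have key : ∀ j : Fin n, (f j - μ) * (t j - g j) ≤ 0 := by
    intro j
    by_cases hj : (j : ℕ) < k
    · have h1 : μ ≤ f j := hmono (by simp [Fin.le_def]; omega)
      have h2 : t j - g j ≤ 0 := by simp [hg, hj]; linarith [ht1 j]
      nlinarith
    · have h1 : f j ≤ μ := hmono (by simp [Fin.le_def]; omega)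
      have h2 : 0 ≤ t j - g j := by simp [hg, hj]; exact ht0 j
      nlinarith
  have expand : ∑ j, (f j - μ) * (t j - g j)
      = ∑ j, f j * t j - ∑ j, f j * g j - μ * (∑ j, t j) + μ * (∑ j, g j) := by
    simp only [sub_mul, mul_sub, Finset.sum_sub_distrib, Finset.mul_sum]
    ring
  have hsum := Finset.sum_nonpos (fun j (_ : j ∈ Finset.univ) => key j)
  rw [expand, hts, hgs] at hsum
  rw [hfg]
  linarith

/-- Ky Fan: for a real symmetric `n×n` matrix `A` with eigenvalues
`λ₁ ≥ ⋯ ≥ λ_n` (given by an antitone `lam` with orthonormal eigenvectors `v`),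
and any `k` orthonormal vectors `x₁,…,x_k`, one has
`∑ᵢ xᵢᵀ A xᵢ ≤ λ₁ + ⋯ + λ_k`, with equality attained by the first `k`
eigenvectors. -/
theorem stmt5 (n k : ℕ) (hk : k ≤ n) (A : Matrix (Fin n) (Fin n) ℝ) (hA : A.IsSymm)
    (lam : Fin n → ℝ) (v : Fin n → (Fin n → ℝ))
    (hv : ∀ i j, v i ⬝ᵥ v j = if i = j then (1 : ℝ) else 0)
    (heig : ∀ i, A.mulVec (v i) = lam i • v i)
    (hmono : Antitone lam) :
    (∀ x : Fin k → (Fin n → ℝ),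
      (∀ i j, x i ⬝ᵥ x j = if i = j then (1 : ℝ) else 0) →
      ∑ i, x i ⬝ᵥ A.mulVec (x i) ≤ ∑ i : Fin k, lam (Fin.castLE hk i)) ∧
    ∑ i : Fin k, v (Fin.castLE hk i) ⬝ᵥ A.mulVec (v (Fin.castLE hk i))
      = ∑ i : Fin k, lam (Fin.castLE hk i) := by
  constructor
  · intro x hx
    set V : Matrix (Fin n) (Fin n) ℝ := Matrix.of v with hV
    set X : Matrix (Fin k) (Fin n) ℝ := Matrix.of x with hX
    have hVVt : V * Vᵀ = 1 := by
      ext i j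
      simpa [Matrix.mul_apply, Matrix.transpose_apply, Matrix.one_apply, hV,
        dotProduct] using hv i j
    have hVtV : Vᵀ * V = 1 := mul_eq_one_comm.mp hVVt
    have hXXt : X * Xᵀ = 1 := by
      ext i j
      simpa [Matrix.mul_apply, Matrix.transpose_apply, Matrix.one_apply, hX,
        dotProduct] using hx i j
    have hAV : A * Vᵀ = Vᵀ * Matrix.diagonal lam := by
      ext p q
      have h1 : (A *ᵥ v q) p = lam q * v q p := by
        rw [heig]; simp [Pi.smul_apply, smul_eq_mul]
      rw [Matrix.mul_diagonal, mul_comm]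
      simpa [Matrix.mul_apply, Matrix.mulVec, Matrix.transpose_apply, hV,
        dotProduct] using h1
    have step1 : ∀ i, x i ⬝ᵥ A *ᵥ x i = ∑ j, lam j * ((V *ᵥ x i) j) ^ 2 := by
      intro i
      have hA2 : A = Vᵀ * Matrix.diagonal lam * V := by
        calc A = A * (Vᵀ * V) := by rw [hVtV, Matrix.mul_one]
          _ = A * Vᵀ * V := by rw [Matrix.mul_assoc]
          _ = Vᵀ * Matrix.diagonal lam * V := by rw [hAV]
      calc x i ⬝ᵥ A *ᵥ x i
          = x i ⬝ᵥ Vᵀ *ᵥ (Matrix.diagonal lam *ᵥ (V *ᵥ x i)) := by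
            rw [hA2]; simp only [← Matrix.mulVec_mulVec]
        _ = (V *ᵥ x i) ⬝ᵥ (Matrix.diagonal lam *ᵥ (V *ᵥ x i)) :=
            kyfan_helper_cross V _ _
        _ = ∑ j, lam j * ((V *ᵥ x i) j) ^ 2 := by
            simp only [dotProduct, Matrix.mulVec_diagonal]
            exact Finset.sum_congr rfl fun j _ => by ring
    have hc : ∀ i j, (X *ᵥ v j) i = (V *ᵥ x i) j := by
      intro i j
      simp only [Matrix.mulVec, hX, hV, Matrix.of_apply, dotProduct]
      exact Finset.sum_congr rfl fun l _ => mul_comm _ _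
    set t : Fin n → ℝ := fun j => (X *ᵥ v j) ⬝ᵥ (X *ᵥ v j) with ht
    have htj : ∀ j, t j = ∑ i, ((X *ᵥ v j) i) ^ 2 := by
      intro j
      simp only [ht, dotProduct, ← sq]
    have ht0 : ∀ j, 0 ≤ t j := fun j => kyfan_dp_self_nonneg _
    have ht1 : ∀ j, t j ≤ 1 := by
      intro j
      set w : Fin k → ℝ := X *ᵥ v j with hw
      have e1 : v j ⬝ᵥ v j = 1 := by simpa using hv j j
      have e2 : v j ⬝ᵥ (Xᵀ *ᵥ w) = w ⬝ᵥ w := kyfan_helper_cross X (v j) w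
      have e3 : (Xᵀ *ᵥ w) ⬝ᵥ (Xᵀ *ᵥ w) = w ⬝ᵥ w :=
        kyfan_helper_norm Xᵀ (by rw [Matrix.transpose_transpose]; exact hXXt) w
      have e4 : (Xᵀ *ᵥ w) ⬝ᵥ v j = w ⬝ᵥ w := by
        rw [dotProduct_comm]; exact e2
      have hnn := kyfan_dp_self_nonneg (v j - Xᵀ *ᵥ w)
      rw [sub_dotProduct, dotProduct_sub, dotProduct_sub,
        e1, e2, e3, e4] at hnn
      have : t j = w ⬝ᵥ w := rfl
      linarith
    have hts : ∑ j, t j = k := by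
      have : ∀ j, t j = ∑ i, ((V *ᵥ x i) j) ^ 2 := by
        intro j
        rw [htj]
        exact Finset.sum_congr rfl fun i _ => by rw [hc]
      rw [Finset.sum_congr rfl fun j _ => this j, Finset.sum_comm]
      have hone : ∀ i : Fin k, ∑ j, ((V *ᵥ x i) j) ^ 2 = 1 := by
        intro i
        have h1 := kyfan_helper_norm V hVtV (x i)
        have h2 : x i ⬝ᵥ x i = 1 := by simpa using hx i i
        rw [← h2, ← h1]
        simp only [dotProduct, ← sq]
      rw [Finset.sum_congr rfl fun i _ => hone i]
      simp
    have main : ∑ i, x i ⬝ᵥ A *ᵥ x i = ∑ j, lam j * t j := by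
      rw [Finset.sum_congr rfl fun i (_ : i ∈ Finset.univ) => step1 i, Finset.sum_comm]
      apply Finset.sum_congr rfl
      intro j _
      rw [htj, Finset.mul_sum]
      exact Finset.sum_congr rfl fun i _ => by rw [hc]
    rw [main]
    exact kyfan_aux_ineq n k hk lam t hmono ht0 ht1 hts
  · apply Finset.sum_congr rfl
    intro i _
    rw [heig, dotProduct_smul, smul_eq_mul, hv, if_pos rfl, mul_one]
end

section
/- For A ∈ R^{m×n} with singular values σ₁(A) ≥ σ₂(A) ≥ ..., and any subspaces U ⊆ R^m of dimension p and V ⊆ R^n of dimension q, the squared Frobenius norm of the projection of A onto U⊗V is at most σ₁(A)² + ... + σ_l(A)², where l = min(p,q,rank A); equality holds when U and V are spanned by the first l left and right singular vectors of A. -/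
/-!
Take orthonormal bases `a` of `U` and `b` of `V`. The rank-one matrices `a_s b_tᵀ` form an
orthonormal basis of `U ⊗ V`, so `‖P_{U⊗V} A‖² = ∑_{s,t} (a_sᵀ A b_t)²`. Bessel's inequality in the
index `t` bounds this by `∑_i σ_i² c_i` with `c_i = ∑_s (a_s ⬝ u_i)²`; Bessel again gives
`0 ≤ c_i ≤ 1` and `∑_i c_i ≤ p`, and such a weighted sum of the decreasing `σ_i²` is at most
`σ_1² + ⋯ + σ_p²`. Exchanging the roles of `U` and `V` gives the bound with `q`. When `a`, `b` are
the leading singular vectors, `a_sᵀ A b_t = σ_s δ_st`, which gives equality.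
-/

open scoped Matrix RealInnerProductSpace

/-- The subspace `U ⊗ V` of `m×n` matrices (vectorized as
`EuclideanSpace ℝ (Fin m × Fin n)` with the Frobenius inner product):
the span of all rank-one matrices `u vᵀ` with `u ∈ U`, `v ∈ V`. -/
noncomputable def matTensorSubspace {m n : ℕ}
    (U : Submodule ℝ (Fin m → ℝ)) (V : Submodule ℝ (Fin n → ℝ)) :
    Submodule ℝ (EuclideanSpace ℝ (Fin m × Fin n)) :=
  Submodule.span ℝ {M | ∃ u ∈ U, ∃ v ∈ V, ∀ p : Fin m × Fin n, M p = u p.1 * v p.2}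

open Submodule Finset

section

variable {m n : ℕ}

noncomputable def outerProduct :
    (Fin m → ℝ) →ₗ[ℝ] (Fin n → ℝ) →ₗ[ℝ] EuclideanSpace ℝ (Fin m × Fin n) :=
  LinearMap.mk₂ ℝ (fun w z => WithLp.toLp 2 fun pt => w pt.1 * z pt.2)
    (fun _ _ _ => by ext; simp [add_mul]) (fun _ _ _ => by ext; simp [mul_assoc])
    (fun _ _ _ => by ext; simp [mul_add]) (fun _ _ _ => by ext; simp [mul_left_comm])

@[simp] lemma outerProduct_apply (w : Fin m → ℝ) (z : Fin n → ℝ) (pt : Fin m × Fin n) :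
    outerProduct w z pt = w pt.1 * z pt.2 := rfl

lemma matTensorSubspace_eq_map₂ (U : Submodule ℝ (Fin m → ℝ)) (V : Submodule ℝ (Fin n → ℝ)) :
    matTensorSubspace U V = map₂ outerProduct U V := by
  rw [map₂_eq_span_image2, matTensorSubspace]
  congr 1
  ext M
  simp only [Set.mem_ofPred_eq, Set.mem_image2, SetLike.mem_coe]
  refine exists_congr fun w => and_congr_right fun _ =>
    exists_congr fun z => and_congr_right fun _ => ?_
  rw [eq_comm, WithLp.ext_iff, funext_iff]
  rfl

lemma matTensorSubspace_span_span {ι κ : Type*} (a : ι → Fin m → ℝ) (b : κ → Fin n → ℝ) :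
    matTensorSubspace (span ℝ (Set.range a)) (span ℝ (Set.range b)) =
      span ℝ (Set.range fun st : ι × κ => outerProduct (a st.1) (b st.2)) := by
  rw [matTensorSubspace_eq_map₂, map₂_span_span, Set.image2_range]

lemma inner_outerProduct_outerProduct (w w' : Fin m → ℝ) (z z' : Fin n → ℝ) :
    ⟪outerProduct w z, outerProduct w' z'⟫ = (w ⬝ᵥ w') * (z ⬝ᵥ z') := by
  simp only [EuclideanSpace.inner_eq_star_dotProduct, dotProduct, Fintype.sum_prod_type,
    sum_mul_sum]
  simp [mul_mul_mul_comm, mul_comm]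

lemma orthonormal_outerProduct {ι κ : Type*} [DecidableEq ι] [DecidableEq κ]
    {a : ι → Fin m → ℝ} {b : κ → Fin n → ℝ}
    (ha : ∀ s t, a s ⬝ᵥ a t = if s = t then (1 : ℝ) else 0)
    (hb : ∀ s t, b s ⬝ᵥ b t = if s = t then (1 : ℝ) else 0) :
    Orthonormal ℝ fun st : ι × κ => outerProduct (a st.1) (b st.2) := by
  rw [orthonormal_iff_ite]
  rintro ⟨s, t⟩ ⟨s', t'⟩
  simp only [inner_outerProduct_outerProduct, ha, hb, Prod.mk.injEq, ite_zero_mul_ite_zero,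
    mul_one]

section Hilbert

variable {E : Type*} [NormedAddCommGroup E] [InnerProductSpace ℝ E]

lemma starProjection_span_orthonormal {ι : Type*} [Fintype ι] {e : ι → E}
    [(span ℝ (Set.range e)).HasOrthogonalProjection] (he : Orthonormal ℝ e) (x : E) :
    (span ℝ (Set.range e)).starProjection x = ∑ i, ⟪e i, x⟫ • e i := by
  refine eq_starProjection_of_mem_of_inner_eq_zero
    (sum_mem fun i _ => smul_mem _ _ (subset_span (Set.mem_range_self i))) fun w hw => ?_
  suffices span ℝ (Set.range e) ≤ LinearMap.ker (innerₛₗ ℝ (x - ∑ i, ⟪e i, x⟫ • e i)) from this hw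
  rw [span_le, Set.range_subset_iff]
  intro j
  classical
  simp [orthonormal_iff_ite.mp he, real_inner_comm]

lemma norm_sq_starProjection_span_orthonormal {ι : Type*} [Fintype ι] {e : ι → E}
    [(span ℝ (Set.range e)).HasOrthogonalProjection] (he : Orthonormal ℝ e) (x : E) :
    ‖(span ℝ (Set.range e)).starProjection x‖ ^ 2 = ∑ i, ⟪e i, x⟫ ^ 2 := by
  rw [← real_inner_self_eq_norm_sq, starProjection_span_orthonormal he, he.inner_sum]
  simp [sq]

end Hilbert

section Dot

variable {ι : Type*} [DecidableEq ι] {a : ι → Fin m → ℝ}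

lemma orthonormal_toLp (ha : ∀ s t, a s ⬝ᵥ a t = if s = t then (1 : ℝ) else 0) :
    Orthonormal ℝ fun i => (WithLp.toLp 2 (a i) : EuclideanSpace ℝ (Fin m)) := by
  rw [orthonormal_iff_ite]
  intro s t
  simp [EuclideanSpace.inner_toLp_toLp, dotProduct_comm, ha]

lemma sum_sq_dotProduct_le [Fintype ι]
    (ha : ∀ s t, a s ⬝ᵥ a t = if s = t then (1 : ℝ) else 0) (z : Fin m → ℝ) :
    ∑ i, (a i ⬝ᵥ z) ^ 2 ≤ z ⬝ᵥ z := by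
  have h := (orthonormal_toLp ha).sum_inner_products_le
    (x := (WithLp.toLp 2 z : EuclideanSpace ℝ (Fin m))) (s := univ)
  rw [← real_inner_self_eq_norm_sq, EuclideanSpace.inner_toLp_toLp] at h
  simpa [EuclideanSpace.inner_toLp_toLp, dotProduct_comm] using h

lemma dotProduct_self_sum_smul [Fintype ι]
    (ha : ∀ s t, a s ⬝ᵥ a t = if s = t then (1 : ℝ) else 0) (c : ι → ℝ) :
    (∑ i, c i • a i) ⬝ᵥ (∑ i, c i • a i) = ∑ i, c i ^ 2 := by
  simp [sum_dotProduct, dotProduct_sum, ha, sq]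

end Dot

lemma exists_orthonormal_span_eq {p : ℕ} (U : Submodule ℝ (Fin m → ℝ))
    (hU : Module.finrank ℝ U = p) :
    ∃ a : Fin p → Fin m → ℝ,
      (∀ s t, a s ⬝ᵥ a t = if s = t then (1 : ℝ) else 0) ∧ span ℝ (Set.range a) = U := by
  let e := WithLp.linearEquiv 2 ℝ (Fin m → ℝ)
  let W := U.comap e.toLinearMap
  have hW : Module.finrank ℝ W = p := by
    rw [← hU, ← LinearEquiv.finrank_map_eq e.symm U, ← comap_equiv_eq_map_symm]
  let b : OrthonormalBasis (Fin p) ℝ W := (stdOrthonormalBasis ℝ W).reindex (finCongr hW)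
  refine ⟨fun s => e (b s), fun s t => ?_, ?_⟩
  · rw [← orthonormal_iff_ite.mp b.orthonormal s t, Submodule.coe_inner,
      EuclideanSpace.inner_eq_star_dotProduct, dotProduct_comm]
    rfl
  · have hb : span ℝ (Set.range b) = ⊤ := by rw [← b.coe_toBasis]; exact b.toBasis.span_eq
    rw [show (fun s => e (b s)) = e.toLinearMap ∘ W.subtype ∘ b from rfl, Set.range_comp,
      Set.range_comp, span_image, span_image, hb, Submodule.map_top, range_subtype]
    exact map_comap_eq_of_surjective e.surjective U

lemma sum_mul_le_sum_filter_val_lt {r p : ℕ} {f c : Fin r → ℝ} (hf : Antitone f)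
    (hf0 : ∀ i, 0 ≤ f i) (hc0 : ∀ i, 0 ≤ c i) (hc1 : ∀ i, c i ≤ 1) (hcp : ∑ i, c i ≤ p) :
    ∑ i, f i * c i ≤ ∑ i ∈ {i : Fin r | ↑i < p}, f i := by
  -- Exchange argument around the threshold `τ = f p`: weight placed at an index `≥ p` earns at
  -- most `τ` per unit, weight missing at an index `< p` loses at least `τ` per unit.
  set τ : ℝ := if h : p < r then f ⟨p, h⟩ else 0 with hτ
  have hτ0 : 0 ≤ τ := by rw [hτ]; split <;> simp [hf0]
  have hterm : ∀ i, f i * c i ≤ (if (i : ℕ) < p then f i else 0) +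
      τ * (c i - if (i : ℕ) < p then 1 else 0) := by
    intro i
    split_ifs with hip
    · have : τ ≤ f i := by
        rw [hτ]; split_ifs with hpr
        · exact hf (Fin.mk_le_of_le_val hip.le)
        · exact hf0 i
      nlinarith [hc1 i]
    · have hpr : p < r := by omega
      have : f i ≤ τ := by
        rw [hτ, dif_pos hpr]; exact hf (Fin.le_iff_val_le_val.2 (not_lt.1 hip))
      nlinarith [hc0 i]
  have hslack : τ * (∑ i, c i - #{i : Fin r | ↑i < p}) ≤ 0 := by
    rw [Fin.card_filter_val_lt]
    by_cases hpr : p < r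
    · exact mul_nonpos_of_nonneg_of_nonpos hτ0 (by rw [min_eq_right hpr.le]; linarith)
    · simp [hτ, hpr]
  calc ∑ i, f i * c i
      ≤ ∑ i : Fin r, ((if (i : ℕ) < p then f i else 0) +
          τ * (c i - if (i : ℕ) < p then 1 else 0)) :=
        sum_le_sum fun i _ => hterm i
    _ = ∑ i ∈ {i : Fin r | ↑i < p}, f i + τ * (∑ i, c i - #{i : Fin r | ↑i < p}) := by
        rw [sum_add_distrib, ← mul_sum, sum_sub_distrib, sum_ite, sum_boole]
        simp
    _ ≤ ∑ i ∈ {i : Fin r | ↑i < p}, f i := by linarith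

lemma sum_castLE_eq_sum_filter {k r : ℕ} (h : k ≤ r) (f : Fin r → ℝ) :
    ∑ j : Fin k, f (Fin.castLE h j) = ∑ i ∈ {i : Fin r | ↑i < k}, f i := by
  rw [← Fin.coe_castLEEmb, ← sum_map univ (Fin.castLEEmb h) f]
  congr 1
  ext i
  simp only [mem_map, mem_univ, true_and, mem_filter]
  exact ⟨fun ⟨j, hj⟩ => hj ▸ j.isLt, fun hi => ⟨⟨i, hi⟩, rfl⟩⟩

lemma filter_val_lt_min_eq {k r : ℕ} :
    (univ.filter fun i : Fin r => ↑i < min k r) = univ.filter fun i : Fin r => ↑i < k := by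
  ext i
  simp

section SingularValues

variable {r : ℕ} {u : Fin r → Fin m → ℝ} {v : Fin r → Fin n → ℝ} {σ : Fin r → ℝ}

lemma inner_outerProduct_sum_smul_outerProduct (w : Fin m → ℝ) (z : Fin n → ℝ) :
    ⟪outerProduct w z, ∑ i, σ i • outerProduct (u i) (v i)⟫ =
      ∑ i, σ i * ((w ⬝ᵥ u i) * (z ⬝ᵥ v i)) := by
  simp [inner_sum, inner_smul_right, inner_outerProduct_outerProduct]

lemma sum_sq_sum_mul_dotProduct_le {p : ℕ} {κ : Type*} [Fintype κ] [DecidableEq κ]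
    (hu : ∀ i j, u i ⬝ᵥ u j = if i = j then (1 : ℝ) else 0)
    (hv : ∀ i j, v i ⬝ᵥ v j = if i = j then (1 : ℝ) else 0)
    (hσ0 : ∀ i, 0 ≤ σ i) (hσ : Antitone σ)
    {a : Fin p → Fin m → ℝ} (ha : ∀ s t, a s ⬝ᵥ a t = if s = t then (1 : ℝ) else 0)
    {b : κ → Fin n → ℝ} (hb : ∀ s t, b s ⬝ᵥ b t = if s = t then (1 : ℝ) else 0) :
    ∑ s, ∑ t, (∑ i, σ i * ((a s ⬝ᵥ u i) * (b t ⬝ᵥ v i))) ^ 2 ≤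
      ∑ i ∈ {i : Fin r | ↑i < p}, σ i ^ 2 := by
  have hrow : ∀ s, ∑ t, (∑ i, σ i * ((a s ⬝ᵥ u i) * (b t ⬝ᵥ v i))) ^ 2 ≤
      ∑ i, σ i ^ 2 * (a s ⬝ᵥ u i) ^ 2 := by
    intro s
    set g := ∑ i, (σ i * (a s ⬝ᵥ u i)) • v i
    calc ∑ t, (∑ i, σ i * ((a s ⬝ᵥ u i) * (b t ⬝ᵥ v i))) ^ 2 = ∑ t, (b t ⬝ᵥ g) ^ 2 := by
          simp only [g, dotProduct_sum, dotProduct_smul, smul_eq_mul, mul_assoc]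
      _ ≤ g ⬝ᵥ g := sum_sq_dotProduct_le hb g
      _ = ∑ i, σ i ^ 2 * (a s ⬝ᵥ u i) ^ 2 := by
          simp only [g, dotProduct_self_sum_smul hv, mul_pow]
  have hc1 : ∀ i, ∑ s, (a s ⬝ᵥ u i) ^ 2 ≤ 1 := fun i => by
    simpa [hu] using sum_sq_dotProduct_le ha (u i)
  have hcp : ∑ i, ∑ s, (a s ⬝ᵥ u i) ^ 2 ≤ p := by
    rw [sum_comm]
    calc ∑ s, ∑ i, (a s ⬝ᵥ u i) ^ 2 ≤ ∑ s, a s ⬝ᵥ a s := sum_le_sum fun s _ => by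
          simpa only [dotProduct_comm] using sum_sq_dotProduct_le hu (a s)
      _ = p := by simp [ha]
  calc ∑ s, ∑ t, (∑ i, σ i * ((a s ⬝ᵥ u i) * (b t ⬝ᵥ v i))) ^ 2
      ≤ ∑ s, ∑ i, σ i ^ 2 * (a s ⬝ᵥ u i) ^ 2 := sum_le_sum fun s _ => hrow s
    _ = ∑ i, σ i ^ 2 * ∑ s, (a s ⬝ᵥ u i) ^ 2 := by rw [sum_comm]; simp only [mul_sum]
    _ ≤ ∑ i ∈ {i : Fin r | ↑i < p}, σ i ^ 2 :=
        sum_mul_le_sum_filter_val_lt (fun i j hij => pow_le_pow_left₀ (hσ0 j) (hσ hij) 2)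
          (fun i => sq_nonneg _) (fun i => sum_nonneg fun s _ => sq_nonneg _) hc1 hcp

end SingularValues

lemma norm_sq_orthogonalProjectionOnto_matTensorSubspace {ι κ : Type*} [Fintype ι] [DecidableEq ι]
    [Fintype κ] [DecidableEq κ] {a : ι → Fin m → ℝ} {b : κ → Fin n → ℝ}
    (ha : ∀ s t, a s ⬝ᵥ a t = if s = t then (1 : ℝ) else 0)
    (hb : ∀ s t, b s ⬝ᵥ b t = if s = t then (1 : ℝ) else 0)
    (A : EuclideanSpace ℝ (Fin m × Fin n)) :
    ‖((matTensorSubspace (span ℝ (Set.range a)) (span ℝ (Set.range b))).orthogonalProjectionOnto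
        A : EuclideanSpace ℝ (Fin m × Fin n))‖ ^ 2 =
      ∑ s, ∑ t, ⟪outerProduct (a s) (b t), A⟫ ^ 2 := by
  rw [← Fintype.sum_prod_type' fun s t => ⟪outerProduct (a s) (b t), A⟫ ^ 2,
    ← norm_sq_starProjection_span_orthonormal (orthonormal_outerProduct ha hb),
    matTensorSubspace_span_span]
  rfl

lemma norm_sq_orthogonalProjectionOnto_matTensorSubspace_comp {r : ℕ} {ι : Type*} [Fintype ι] [DecidableEq ι]
    {u : Fin r → Fin m → ℝ} {v : Fin r → Fin n → ℝ} (σ : Fin r → ℝ)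
    (hu : ∀ i j, u i ⬝ᵥ u j = if i = j then (1 : ℝ) else 0)
    (hv : ∀ i j, v i ⬝ᵥ v j = if i = j then (1 : ℝ) else 0) {e : ι → Fin r}
    (he : Function.Injective e) :
    ‖((matTensorSubspace (span ℝ (Set.range (u ∘ e)))
        (span ℝ (Set.range (v ∘ e)))).orthogonalProjectionOnto
          (∑ i, σ i • outerProduct (u i) (v i)) : EuclideanSpace ℝ (Fin m × Fin n))‖ ^ 2 =
      ∑ j, σ (e j) ^ 2 := by
  have hue : ∀ s t, (u ∘ e) s ⬝ᵥ (u ∘ e) t = if s = t then (1 : ℝ) else 0 := by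
    simp [hu, he.eq_iff]
  have hve : ∀ s t, (v ∘ e) s ⬝ᵥ (v ∘ e) t = if s = t then (1 : ℝ) else 0 := by
    simp [hv, he.eq_iff]
  rw [norm_sq_orthogonalProjectionOnto_matTensorSubspace hue hve]
  simp [inner_outerProduct_sum_smul_outerProduct, hu, hv, he.eq_iff]

end

theorem stmt7_general (m n r p q : ℕ)
    (A : EuclideanSpace ℝ (Fin m × Fin n))
    (u : Fin r → (Fin m → ℝ)) (v : Fin r → (Fin n → ℝ)) (σ : Fin r → ℝ)
    (hu : ∀ i j, u i ⬝ᵥ u j = if i = j then (1 : ℝ) else 0)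
    (hv : ∀ i j, v i ⬝ᵥ v j = if i = j then (1 : ℝ) else 0)
    (hσpos : ∀ i, 0 < σ i) (hσ : Antitone σ)
    (hA : ∀ pt : Fin m × Fin n, A pt = ∑ i, σ i * u i pt.1 * v i pt.2) :
    (∀ U : Submodule ℝ (Fin m → ℝ), ∀ V : Submodule ℝ (Fin n → ℝ),
      Module.finrank ℝ U = p → Module.finrank ℝ V = q →
      ‖(Submodule.orthogonalProjection (matTensorSubspace U V) A : EuclideanSpace ℝ (Fin m × Fin n))‖ ^ 2
        ≤ ∑ i : Fin (min p (min q r)),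
            σ (Fin.castLE (le_trans (min_le_right p (min q r)) (min_le_right q r)) i) ^ 2) ∧
    ‖(Submodule.orthogonalProjection
        (matTensorSubspace
          (Submodule.span ℝ (Set.range fun i : Fin (min p (min q r)) =>
            u (Fin.castLE (le_trans (min_le_right p (min q r)) (min_le_right q r)) i)))
          (Submodule.span ℝ (Set.range fun i : Fin (min p (min q r)) =>
            v (Fin.castLE (le_trans (min_le_right p (min q r)) (min_le_right q r)) i)))) A :
        EuclideanSpace ℝ (Fin m × Fin n))‖ ^ 2
      = ∑ i : Fin (min p (min q r)),
          σ (Fin.castLE (le_trans (min_le_right p (min q r)) (min_le_right q r)) i) ^ 2 := by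
  have hA' : A = ∑ i, σ i • outerProduct (u i) (v i) := by
    ext pt
    simp [hA, mul_assoc]
  have hσ0 : ∀ i, 0 ≤ σ i := fun i => (hσpos i).le
  refine ⟨fun U V hU hV => ?_, ?_⟩
  · obtain ⟨a, ha, rfl⟩ := exists_orthonormal_span_eq U hU
    obtain ⟨b, hb, rfl⟩ := exists_orthonormal_span_eq V hV
    have hp := sum_sq_sum_mul_dotProduct_le hu hv hσ0 hσ ha hb
    have hq := sum_sq_sum_mul_dotProduct_le hv hu hσ0 hσ hb ha
    simp only [mul_comm (b _ ⬝ᵥ v _)] at hq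
    rw [sum_comm] at hq
    rw [sum_castLE_eq_sum_filter _ fun i => σ i ^ 2,
      norm_sq_orthogonalProjectionOnto_matTensorSubspace ha hb, hA']
    simp only [inner_outerProduct_sum_smul_outerProduct]
    rw [← min_assoc, filter_val_lt_min_eq]
    rcases le_total p q with hpq | hqp
    · rwa [min_eq_left hpq]
    · rwa [min_eq_right hqp]
  · rw [hA']
    exact norm_sq_orthogonalProjectionOnto_matTensorSubspace_comp σ hu hv (Fin.castLE_injective _)

/-- let `A = ∑ᵢ σᵢ uᵢ vᵢᵀ` be a singular value decomposition of a
rank-`r` matrix `A` (orthonormal `uᵢ`, `vᵢ`, positive decreasing `σᵢ`).  For any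
subspaces `U` of dimension `p` and `V` of dimension `q`, the squared Frobenius
norm of the projection of `A` onto `U ⊗ V` is at most `σ₁² + ⋯ + σ_l²` where
`l = min(p, q, r)`; equality holds when `U`, `V` are spanned by the first `l`
left and right singular vectors. -/
theorem stmt7 (m n r p q : ℕ)
    (A : EuclideanSpace ℝ (Fin m × Fin n))
    (u : Fin r → (Fin m → ℝ)) (v : Fin r → (Fin n → ℝ)) (σ : Fin r → ℝ)
    (hu : ∀ i j, u i ⬝ᵥ u j = if i = j then (1 : ℝ) else 0)
    (hv : ∀ i j, v i ⬝ᵥ v j = if i = j then (1 : ℝ) else 0)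
    (hσpos : ∀ i, 0 < σ i) (hσ : Antitone σ)
    (hA : ∀ pt : Fin m × Fin n, A pt = ∑ i, σ i * u i pt.1 * v i pt.2)
    (hrank : (Matrix.of fun i j => A (i, j)).rank = r) :
    (∀ U : Submodule ℝ (Fin m → ℝ), ∀ V : Submodule ℝ (Fin n → ℝ),
      Module.finrank ℝ U = p → Module.finrank ℝ V = q →
      ‖(Submodule.orthogonalProjection (matTensorSubspace U V) A : EuclideanSpace ℝ (Fin m × Fin n))‖ ^ 2
        ≤ ∑ i : Fin (min p (min q r)),
            σ (Fin.castLE (le_trans (min_le_right p (min q r)) (min_le_right q r)) i) ^ 2) ∧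
    ‖(Submodule.orthogonalProjection
        (matTensorSubspace
          (Submodule.span ℝ (Set.range fun i : Fin (min p (min q r)) =>
            u (Fin.castLE (le_trans (min_le_right p (min q r)) (min_le_right q r)) i)))
          (Submodule.span ℝ (Set.range fun i : Fin (min p (min q r)) =>
            v (Fin.castLE (le_trans (min_le_right p (min q r)) (min_le_right q r)) i)))) A :
        EuclideanSpace ℝ (Fin m × Fin n))‖ ^ 2
      = ∑ i : Fin (min p (min q r)),
          σ (Fin.castLE (le_trans (min_le_right p (min q r)) (min_le_right q r)) i) ^ 2 :=
  stmt7_general m n r p q A u v σ hu hv hσpos hσ hA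
end

section
/- Fix i ∈ [d] and subspaces U_j ⊆ R^{n_j} with orthonormal bases {u_{k,j}} for j ≠ i. Then the maximum over r_i-dimensional subspaces U_i of ‖P_{U₁⊗...⊗U_d}(T)‖² equals the sum of the r_i largest eigenvalues of the positive semidefinite matrix A_i = Σ_{j_l ∈ [r_l], l≠i} (T × ⊗_{l≠i} u_{j_l,l}) (T × ⊗_{l≠i} u_{j_l,l})ᵀ ∈ R^{n_i×n_i}. -/
/-!
Write `A = A_i`. For an orthonormal basis `w₁, …, w_{r_i}` of `U_i`, the pure tensors
`w_{j_i} ⊗ ⨂_{l ≠ i} u_{j_l,l}` form an orthonormal basis of `U₁ ⊗ ⋯ ⊗ U_d`, and the inner product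
of such a tensor with `T` is `w_{j_i} ⬝ (T × ⨂_{l≠i} u_{j_l,l})`. Summing squares gives
`‖P_{U₁⊗⋯⊗U_d}(T)‖² = ∑ₖ wₖᵀ A wₖ`.

This is bounded by the Ky Fan argument: expanding in the eigenbasis,
`∑ₖ wₖᵀ A wₖ = ∑ₘ λₘ γₘ` with `γₘ = ∑ₖ ⟪wₖ, eₘ⟫²`. By Bessel `0 ≤ γₘ ≤ 1`, by Parseval
`∑ₘ γₘ = r_i`, and for antitone `λ` the weighted sum `∑ₘ λₘ γₘ` under these constraints is
largest when `γ` is the indicator of the first `r_i` indices. The bound is attained at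
`U_i = span(e₁, …, e_{r_i})`.
-/

open scoped Matrix

/-- The contraction `T × (⊗_{l ≠ i} u_{j_l, l}) ∈ ℝ^{n_i}` of a `d`-mode tensor
against one chosen vector in each mode other than `i`. -/
noncomputable def tContractAt {d : ℕ} {n r : Fin d → ℕ}
    (T : EuclideanSpace ℝ (∀ l, Fin (n l)))
    (u : ∀ l, Fin (r l) → (Fin (n l) → ℝ)) (i : Fin d)
    (j : ∀ l : {m : Fin d // m ≠ i}, Fin (r l.1)) : Fin (n i) → ℝ :=
  fun k => ∑ c : ∀ l, Fin (n l),
    if c i = k then T c * ∏ l : {m : Fin d // m ≠ i}, u l.1 (j l) (c l.1) else 0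

/-- The positive semidefinite matrix
`A_i = ∑_{j_l ∈ [r_l], l ≠ i} (T × ⊗_{l≠i} u_{j_l,l})(T × ⊗_{l≠i} u_{j_l,l})ᵀ`. -/
noncomputable def bigA {d : ℕ} {n r : Fin d → ℕ}
    (T : EuclideanSpace ℝ (∀ l, Fin (n l)))
    (u : ∀ l, Fin (r l) → (Fin (n l) → ℝ)) (i : Fin d) :
    Matrix (Fin (n i)) (Fin (n i)) ℝ :=
  Matrix.of fun a b => ∑ j : ∀ l : {m : Fin d // m ≠ i}, Fin (r l.1),
    tContractAt T u i j a * tContractAt T u i j b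

open scoped RealInnerProductSpace
open Module Submodule

theorem sum_mul_le_sum_of_threshold {ι : Type*} [Fintype ι] (s : Finset ι)
    {f γ : ι → ℝ} {t : ℝ} (hs : ∀ i ∈ s, t ≤ f i) (hsc : ∀ i ∉ s, f i ≤ t)
    (hγ0 : ∀ i, 0 ≤ γ i) (hγ1 : ∀ i, γ i ≤ 1) (hγ : ∑ i, γ i = s.card) :
    ∑ i, f i * γ i ≤ ∑ i ∈ s, f i := by
  classical
  have hterm : ∀ i, (f i - t) * (γ i - if i ∈ s then 1 else 0) ≤ 0 := by
    intro i
    split_ifs with hi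
    · nlinarith [hs i hi, hγ1 i]
    · nlinarith [hsc i hi, hγ0 i]
  have hsum : ∑ i, (f i - t) * (γ i - if i ∈ s then 1 else 0)
      = ∑ i, f i * γ i - ∑ i ∈ s, f i := by
    simp only [mul_sub, sub_mul, Finset.sum_sub_distrib, mul_ite, mul_one, mul_zero,
      Finset.sum_ite_mem, Finset.univ_inter, ← Finset.mul_sum, hγ, Finset.sum_const, nsmul_eq_mul]
    ring
  linarith [Finset.sum_nonpos fun i (_ : i ∈ Finset.univ) => hterm i]

theorem sum_mul_le_sum_castLE_of_antitone {N R : ℕ} (hR : R ≤ N) {lam γ : Fin N → ℝ}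
    (hlam : Antitone lam) (hγ0 : ∀ m, 0 ≤ γ m) (hγ1 : ∀ m, γ m ≤ 1) (hγ : ∑ m, γ m = R) :
    ∑ m, lam m * γ m ≤ ∑ k : Fin R, lam (Fin.castLE hR k) := by
  set s := Finset.univ.map (Fin.castLEEmb hR)
  have hmem : ∀ m, m ∈ s ↔ m.val < R := fun m => by
    simp only [s, Finset.mem_map, Finset.mem_univ, Fin.castLEEmb_apply, true_and]
    exact ⟨fun ⟨k, hk⟩ => hk ▸ k.isLt, fun h => ⟨⟨m, h⟩, rfl⟩⟩
  obtain ⟨t, hlt, hgt⟩ : ∃ t, (∀ m : Fin N, m.val < R → t ≤ lam m) ∧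
      ∀ m : Fin N, R ≤ m.val → lam m ≤ t := by
    rcases hR.lt_or_eq with h | rfl
    · exact ⟨lam ⟨R, h⟩, fun m hm => hlam (Fin.le_def.2 hm.le),
        fun m hm => hlam (Fin.le_def.2 hm)⟩
    · exact ⟨⨅ m, lam m, fun m _ => ciInf_le (Finite.bddBelow_range lam) m,
        fun m hm => absurd m.isLt (by omega)⟩
  have := sum_mul_le_sum_of_threshold s (f := lam) (fun m hm => hlt m ((hmem m).1 hm))
    (fun m hm => hgt m (not_lt.1 (mt (hmem m).2 hm))) hγ0 hγ1 (by simp [s, hγ])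
  simpa only [s, Finset.sum_map, Fin.castLEEmb_apply] using this

section KyFan

variable {E : Type*} [NormedAddCommGroup E] [InnerProductSpace ℝ E]

theorem OrthonormalBasis.inner_map_self_eq_sum {ι : Type*} [Fintype ι]
    (b : OrthonormalBasis ι ℝ E) {A : E →ₗ[ℝ] E} {lam : ι → ℝ}
    (hA : ∀ m, A (b m) = lam m • b m) (x : E) :
    ⟪x, A x⟫ = ∑ m, lam m * ⟪b m, x⟫ ^ 2 := by
  have hAx : A x = ∑ m, (lam m * ⟪b m, x⟫) • b m := by
    conv_lhs => rw [← b.sum_repr' x]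
    simp only [map_sum, map_smul, hA, smul_smul, mul_comm]
  rw [hAx, inner_sum]
  refine Finset.sum_congr rfl fun m _ => ?_
  rw [real_inner_smul_right, real_inner_comm]
  ring

theorem sum_inner_map_self_le_sum_castLE {N R : ℕ} (hR : R ≤ N)
    (b : OrthonormalBasis (Fin N) ℝ E) {A : E →ₗ[ℝ] E} {lam : Fin N → ℝ}
    (hA : ∀ m, A (b m) = lam m • b m) (hlam : Antitone lam) {w : Fin R → E}
    (hw : Orthonormal ℝ w) :
    ∑ k, ⟪w k, A (w k)⟫ ≤ ∑ k : Fin R, lam (Fin.castLE hR k) := by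
  have hbessel : ∀ m, ∑ k, ⟪w k, b m⟫ ^ 2 ≤ 1 := fun m => by
    have := hw.sum_inner_products_le (b m) (s := Finset.univ)
    simp only [b.orthonormal.1 m, Real.norm_eq_abs, sq_abs, one_pow] at this
    exact this
  have hparseval : ∑ m, ∑ k, ⟪w k, b m⟫ ^ 2 = R := by
    rw [Finset.sum_comm]
    simp only [real_inner_comm (b _), b.sum_sq_inner_right, hw.1]
    simp
  calc ∑ k, ⟪w k, A (w k)⟫ = ∑ m, lam m * ∑ k, ⟪w k, b m⟫ ^ 2 := by
        simp only [b.inner_map_self_eq_sum hA, Finset.mul_sum, real_inner_comm (b _)]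
        exact Finset.sum_comm
    _ ≤ _ := sum_mul_le_sum_castLE_of_antitone hR hlam (fun m => by positivity) hbessel hparseval

end KyFan

theorem orthonormal_toLp_iff {ι κ : Type*} [Fintype κ] [DecidableEq ι] {v : ι → κ → ℝ} :
    Orthonormal ℝ (fun k => (WithLp.toLp 2 (v k) : EuclideanSpace ℝ κ)) ↔
      ∀ j k, v j ⬝ᵥ v k = if j = k then 1 else 0 := by
  simp [orthonormal_iff_ite, EuclideanSpace.inner_toLp_toLp, dotProduct_comm]

theorem Matrix.sum_dotProduct_mulVec_le_sum_castLE {N R : ℕ} (hR : R ≤ N)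
    {A : Matrix (Fin N) (Fin N) ℝ} {lam : Fin N → ℝ} {e : Fin N → Fin N → ℝ}
    (he : ∀ j k, e j ⬝ᵥ e k = if j = k then 1 else 0) (hA : ∀ m, A *ᵥ e m = lam m • e m)
    (hlam : Antitone lam) {w : Fin R → Fin N → ℝ}
    (hw : ∀ j k, w j ⬝ᵥ w k = if j = k then 1 else 0) :
    ∑ k, w k ⬝ᵥ A *ᵥ w k ≤ ∑ k : Fin R, lam (Fin.castLE hR k) := by
  have he' := orthonormal_toLp_iff.2 he
  let b : OrthonormalBasis (Fin N) ℝ (EuclideanSpace ℝ (Fin N)) := OrthonormalBasis.mk he'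
    (he'.linearIndependent.span_eq_top_of_card_eq_finrank' (by simp)).ge
  have hb : ∀ m, Matrix.toEuclideanLin A (b m) = lam m • b m := fun m => by
    simp only [b, OrthonormalBasis.coe_mk, Matrix.toLpLin_toLp, Matrix.toLin'_apply, hA,
      WithLp.toLp_smul]
  convert sum_inner_map_self_le_sum_castLE hR b hb hlam (orthonormal_toLp_iff.2 hw) using 2 with k
  simp only [Matrix.toLpLin_toLp, EuclideanSpace.inner_toLp_toLp, Matrix.toLin'_apply,
    star_trivial, dotProduct_comm]

theorem Submodule.exists_orthonormal_span_eq {E : Type*} [NormedAddCommGroup E]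
    [InnerProductSpace ℝ E] (U : Submodule ℝ E) [FiniteDimensional ℝ U] {R : ℕ}
    (hU : finrank ℝ U = R) :
    ∃ w : Fin R → E, Orthonormal ℝ w ∧ span ℝ (Set.range w) = U := by
  let b := (stdOrthonormalBasis ℝ U).reindex (finCongr hU)
  refine ⟨fun k => b k, U.subtypeₗᵢ.orthonormal_comp_iff.2 b.orthonormal, ?_⟩
  change span ℝ (Set.range (U.subtype ∘ b)) = U
  rw [Set.range_comp, Submodule.span_image, ← b.coe_toBasis, b.toBasis.span_eq,
    Submodule.map_subtype_top]

theorem Submodule.exists_dotProduct_orthonormal_span_eq {κ : Type*} [Fintype κ]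
    (U : Submodule ℝ (κ → ℝ)) {R : ℕ} (hU : finrank ℝ U = R) :
    ∃ w : Fin R → κ → ℝ, (∀ j k, w j ⬝ᵥ w k = if j = k then 1 else 0) ∧
      span ℝ (Set.range w) = U := by
  let f : EuclideanSpace ℝ κ ≃ₗ[ℝ] (κ → ℝ) := WithLp.linearEquiv 2 ℝ (κ → ℝ)
  have hU' : finrank ℝ (U.map f.symm.toLinearMap) = R := by
    rw [LinearEquiv.finrank_map_eq, hU]
  obtain ⟨w, hw, hspan⟩ := (U.map f.symm.toLinearMap).exists_orthonormal_span_eq hU'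
  refine ⟨f ∘ w, orthonormal_toLp_iff.1 hw, ?_⟩
  rw [Set.range_comp, ← LinearEquiv.coe_coe, Submodule.span_image, hspan]
  exact (Submodule.map_symm_eq_iff f).1 rfl

theorem Orthonormal.norm_orthogonalProjectionOnto_sq {ι E : Type*} [Fintype ι]
    [NormedAddCommGroup E] [InnerProductSpace ℝ E] {v : ι → E} (hv : Orthonormal ℝ v)
    {U : Submodule ℝ E} [U.HasOrthogonalProjection] (hU : span ℝ (Set.range v) = U) (x : E) :
    ‖U.orthogonalProjectionOnto x‖ ^ 2 = ∑ k, ⟪v k, x⟫ ^ 2 := by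
  subst hU
  let b := (Basis.span hv.linearIndependent).toOrthonormalBasis
    (by rw [show ⇑(Basis.span hv.linearIndependent) = _ from funext (Basis.span_apply _)]
        exact orthonormal_span hv)
  rw [← b.sum_sq_inner_right]
  refine Finset.sum_congr rfl fun k _ => ?_
  rw [inner_orthogonalProjectionOnto_eq_of_mem_left, Basis.coe_toOrthonormalBasis,
    Basis.span_apply]

section PureTensor

variable {ι : Type*} [Fintype ι] {κ : ι → Type*}

noncomputable def pureTensor (x : ∀ l, κ l → ℝ) : EuclideanSpace ℝ (∀ l, κ l) :=
  WithLp.toLp 2 fun a => ∏ l, x l (a l)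

def pureTensors (U : ∀ l, Submodule ℝ (κ l → ℝ)) : Set (EuclideanSpace ℝ (∀ l, κ l)) :=
  pureTensor '' Set.univ.pi fun l => U l

theorem inner_pureTensor [DecidableEq ι] [∀ l, Fintype (κ l)] (x y : ∀ l, κ l → ℝ) :
    ⟪pureTensor x, pureTensor y⟫ = ∏ l, x l ⬝ᵥ y l := by
  simp only [pureTensor, EuclideanSpace.inner_toLp_toLp, dotProduct, star_trivial,
    Finset.prod_univ_sum, Fintype.piFinset_univ, ← Finset.prod_mul_distrib]
  exact Finset.sum_congr rfl fun a _ => Finset.prod_congr rfl fun l _ => mul_comm _ _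

theorem orthonormal_pureTensor [DecidableEq ι] [∀ l, Fintype (κ l)] {ρ : ι → Type*}
    [∀ l, DecidableEq (ρ l)] {b : ∀ l, ρ l → κ l → ℝ}
    (hb : ∀ l j k, b l j ⬝ᵥ b l k = if j = k then 1 else 0) :
    Orthonormal ℝ fun j : ∀ l, ρ l => pureTensor fun l => b l (j l) := by
  classical
  rw [orthonormal_iff_ite]
  intro j j'
  simp only [inner_pureTensor, hb]
  split_ifs with h
  · simp [h]
  · obtain ⟨l, hl⟩ := Function.ne_iff.1 h
    exact Finset.prod_eq_zero (Finset.mem_univ l) (if_neg hl)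

theorem span_pureTensors_span_range [DecidableEq ι] {ρ : ι → Type*} [∀ l, Fintype (ρ l)]
    (b : ∀ l, ρ l → κ l → ℝ) :
    span ℝ (pureTensors fun l => span ℝ (Set.range (b l))) =
      span ℝ (Set.range fun j : ∀ l, ρ l => pureTensor fun l => b l (j l)) := by
  refine le_antisymm (span_le.2 ?_) (span_mono ?_)
  · rintro _ ⟨x, hx, rfl⟩
    choose c hc using fun l => (mem_span_range_iff_exists_fun ℝ).1 (hx l trivial)
    have hxc : pureTensor x =
        ∑ j : ∀ l, ρ l, (∏ l, c l (j l)) • pureTensor fun l => b l (j l) := by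
      ext a
      simp only [pureTensor, ← hc, WithLp.ofLp_sum, WithLp.ofLp_smul, WithLp.ofLp_toLp,
        Finset.sum_apply, Pi.smul_apply, smul_eq_mul, Finset.prod_univ_sum, Fintype.piFinset_univ,
        Finset.prod_mul_distrib]
    rw [hxc]
    exact sum_mem fun j _ => smul_mem _ _ (subset_span ⟨j, rfl⟩)
  · rintro _ ⟨j, rfl⟩
    exact ⟨_, fun l _ => subset_span ⟨j l, rfl⟩, rfl⟩

end PureTensor

theorem dotProduct_mulVec_gram {ι κ : Type*} [Fintype ι] [Fintype κ] (c : ι → κ → ℝ)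
    (x : κ → ℝ) : x ⬝ᵥ (Matrix.of fun a b => ∑ j, c j a * c j b) *ᵥ x = ∑ j, (x ⬝ᵥ c j) ^ 2 := by
  have hgram :
      (Matrix.of fun a b => ∑ j, c j a * c j b) = ∑ j, Matrix.vecMulVec (c j) (c j) := by
    ext a b
    simp [Matrix.sum_apply, Matrix.vecMulVec_apply]
  rw [hgram, Matrix.sum_mulVec, dotProduct_sum]
  refine Finset.sum_congr rfl fun j _ => ?_
  rw [Matrix.vecMulVec_mulVec, op_smul_eq_smul, dotProduct_smul, smul_eq_mul, dotProduct_comm, sq]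

theorem inner_pureTensor_eq_dotProduct_tContractAt {d : ℕ} {n r : Fin d → ℕ}
    (T : EuclideanSpace ℝ (∀ l, Fin (n l))) (u : ∀ l, Fin (r l) → (Fin (n l) → ℝ)) (i : Fin d)
    (j : ∀ l : {m : Fin d // m ≠ i}, Fin (r l.1)) {x : ∀ l, Fin (n l) → ℝ}
    (hx : ∀ l : {m : Fin d // m ≠ i}, x l = u l (j l)) :
    ⟪pureTensor x, T⟫ = x i ⬝ᵥ tContractAt T u i j := by
  have hsplit : ∀ c : ∀ l, Fin (n l),
      ∏ l, x l (c l) = x i (c i) * ∏ l : {m : Fin d // m ≠ i}, u l.1 (j l) (c l.1) := fun c => by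
    rw [Fintype.prod_eq_mul_prod_subtype_ne _ i]
    simp only [hx]
  simp only [pureTensor, EuclideanSpace.inner_eq_star_dotProduct, dotProduct, star_trivial,
    tContractAt, Finset.mul_sum, mul_ite, mul_zero]
  rw [Finset.sum_comm]
  refine Finset.sum_congr rfl fun c _ => ?_
  rw [Finset.sum_ite_eq, if_pos (Finset.mem_univ _), hsplit]
  ring

theorem sum_inner_pureTensor_update_sq_eq_sum_dotProduct_bigA {d : ℕ} {n r : Fin d → ℕ}
    (i : Fin d) (T : EuclideanSpace ℝ (∀ l, Fin (n l))) (u : ∀ l, Fin (r l) → (Fin (n l) → ℝ))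
    (w : Fin (r i) → Fin (n i) → ℝ) :
    ∑ j : ∀ l, Fin (r l), ⟪pureTensor fun l => Function.update u i w l (j l), T⟫ ^ 2
      = ∑ k, w k ⬝ᵥ bigA T u i *ᵥ w k := by
  calc ∑ j : ∀ l, Fin (r l), ⟪pureTensor fun l => Function.update u i w l (j l), T⟫ ^ 2
      = ∑ j : ∀ l, Fin (r l), (w (j i) ⬝ᵥ tContractAt T u i fun l => j l) ^ 2 := by
        refine Finset.sum_congr rfl fun j _ => ?_
        rw [inner_pureTensor_eq_dotProduct_tContractAt T u i (fun l => j l)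
          fun l => by simp [l.2]]
        simp
    _ = ∑ k, ∑ j : ∀ l : {m // m ≠ i}, Fin (r l), (w k ⬝ᵥ tContractAt T u i j) ^ 2 := by
        rw [← Fintype.sum_prod_type']
        exact Fintype.sum_equiv (Equiv.piSplitAt i _) _ _ fun j => rfl
    _ = ∑ k, w k ⬝ᵥ bigA T u i *ᵥ w k := by
        simp only [bigA, dotProduct_mulVec_gram]

theorem norm_orthogonalProjectionOnto_sq_eq_sum_dotProduct_bigA {d : ℕ} {n r : Fin d → ℕ}
    (i : Fin d) (T : EuclideanSpace ℝ (∀ l, Fin (n l))) (u : ∀ l, Fin (r l) → (Fin (n l) → ℝ))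
    (hu : ∀ l, l ≠ i → ∀ j k, u l j ⬝ᵥ u l k = if j = k then 1 else 0)
    (w : Fin (r i) → Fin (n i) → ℝ) (hw : ∀ j k, w j ⬝ᵥ w k = if j = k then 1 else 0) :
    ‖(span ℝ {v : EuclideanSpace ℝ (∀ l, Fin (n l)) | ∃ x : ∀ l, Fin (n l) → ℝ,
        x i ∈ span ℝ (Set.range w) ∧ (∀ l, l ≠ i → x l ∈ span ℝ (Set.range (u l))) ∧
        ∀ a, v a = ∏ l, x l (a l)}).orthogonalProjectionOnto T‖ ^ 2
      = ∑ k, w k ⬝ᵥ bigA T u i *ᵥ w k := by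
  set b := Function.update u i w with hb_def
  have hb : ∀ l j k, b l j ⬝ᵥ b l k = if j = k then 1 else 0 := by
    intro l
    rcases eq_or_ne l i with rfl | hl
    · simpa [b] using hw
    · simpa [b, hl] using hu l hl
  have hset : {v : EuclideanSpace ℝ (∀ l, Fin (n l)) | ∃ x : ∀ l, Fin (n l) → ℝ,
      x i ∈ span ℝ (Set.range w) ∧ (∀ l, l ≠ i → x l ∈ span ℝ (Set.range (u l))) ∧
      ∀ a, v a = ∏ l, x l (a l)} = pureTensors fun l => span ℝ (Set.range (b l)) := by
    ext v
    simp only [pureTensors, Set.mem_image, Set.mem_univ_pi, SetLike.mem_coe, Set.mem_ofPred_eq]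
    refine exists_congr fun x => ?_
    rw [← and_assoc, hb_def, Function.forall_update_iff _ fun l z => x l ∈ span ℝ (Set.range z)]
    refine and_congr_right' ?_
    rw [pureTensor, ← (WithLp.ofLp_injective 2).eq_iff, funext_iff]
    simp only [eq_comm]
  rw [(orthonormal_pureTensor hb).norm_orthogonalProjectionOnto_sq
    (by rw [hset, span_pureTensors_span_range]) T]
  exact sum_inner_pureTensor_update_sq_eq_sum_dotProduct_bigA i T u w

/-- fix `i` and subspaces `U_l = span(u_{1,l},…,u_{r_l,l})` with
orthonormal bases for `l ≠ i`.  The maximum over `r_i`-dimensional subspaces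
`U_i ⊆ ℝ^{n_i}` of `‖P_{U₁⊗⋯⊗U_d}(T)‖²` equals the sum of the `r_i` largest
eigenvalues of the positive semidefinite matrix `A_i` (whose eigenvalues are
given by the antitone `lam` with orthonormal eigenvectors `e`), and it is
attained. -/
theorem stmt17 {d : ℕ} (n r : Fin d → ℕ) (i : Fin d) (hri : r i ≤ n i)
    (T : EuclideanSpace ℝ (∀ l, Fin (n l)))
    (u : ∀ l, Fin (r l) → (Fin (n l) → ℝ))
    (hu : ∀ l, l ≠ i → ∀ j k, u l j ⬝ᵥ u l k = if j = k then (1 : ℝ) else 0)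
    (lam : Fin (n i) → ℝ) (e : Fin (n i) → (Fin (n i) → ℝ))
    (he : ∀ j k, e j ⬝ᵥ e k = if j = k then (1 : ℝ) else 0)
    (heig : ∀ k, (bigA T u i).mulVec (e k) = lam k • e k)
    (hmono : Antitone lam) :
    IsGreatest {val : ℝ | ∃ Ui : Submodule ℝ (Fin (n i) → ℝ),
        Module.finrank ℝ Ui = r i ∧
        val = ‖(Submodule.orthogonalProjection (Submodule.span ℝ
            {v : EuclideanSpace ℝ (∀ l, Fin (n l)) | ∃ x : ∀ l, Fin (n l) → ℝ,
              x i ∈ Ui ∧ (∀ l, l ≠ i → x l ∈ Submodule.span ℝ (Set.range (u l))) ∧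
              ∀ a, v a = ∏ l, x l (a l)}) T : EuclideanSpace ℝ (∀ l, Fin (n l)))‖ ^ 2}
      (∑ k : Fin (r i), lam (Fin.castLE hri k)) := by
  set w₀ : Fin (r i) → Fin (n i) → ℝ := fun k => e (Fin.castLE hri k)
  have hw₀ : ∀ j k, w₀ j ⬝ᵥ w₀ k = if j = k then 1 else 0 := fun j k => by
    simp [w₀, he, (Fin.castLE_injective hri).eq_iff]
  refine ⟨⟨span ℝ (Set.range w₀), ?_, ?_⟩, ?_⟩
  · rw [finrank_span_eq_card, Fintype.card_fin]
    exact ((orthonormal_toLp_iff.2 hw₀).linearIndependent).of_comp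
      (WithLp.linearEquiv 2 ℝ (Fin (n i) → ℝ)).symm.toLinearMap
  · refine Eq.trans ?_
      (norm_orthogonalProjectionOnto_sq_eq_sum_dotProduct_bigA i T u hu w₀ hw₀).symm
    simp [w₀, heig, he]
  · rintro _ ⟨Ui, hrank, rfl⟩
    obtain ⟨w, hw, rfl⟩ := Ui.exists_dotProduct_orthonormal_span_eq hrank
    exact (norm_orthogonalProjectionOnto_sq_eq_sum_dotProduct_bigA i T u hu w hw).trans_le
      (Matrix.sum_dotProduct_mulVec_le_sum_castLE hri he heig hmono hw)
end
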